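/- Every real-valued signal x ∈ Π[N] admits the tight-frame expansion x[k] = (1/2) Σ_{μ=0}^{1} Σ_{l=0}^{N/2−1} ( y^μ[l]·ψ_μ[k−2l] + c^μ[l]·φ_μ[k−2l] ), where y^μ[l] = ⟨x, ψ_μ[·−2l]⟩ and c^μ[l] = ⟨x, φ_μ[·−2l]⟩; i.e. the combined system of two-sample shifts of ψ0, ψ1, φ0, φ1 forms a tight frame of Π[N] with frame constant 2. -/

import Mathlib

open Finset

noncomputable def omegaN (N : ℕ) : ℂ := Complex.exp (2 * Real.pi * Complex.I / N)

noncomputable def U4r (N r : ℕ) (n : ℤ) : ℝ :=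
  ((Real.cos (Real.pi * n / N)) ^ (4 * r) + (Real.sin (Real.pi * n / N)) ^ (4 * r)) / 2

noncomputable def betaF (N r : ℕ) (n : ℤ) : ℂ :=
  Complex.ofReal ((Real.cos (Real.pi * n / N)) ^ (2 * r) / Real.sqrt (U4r N r n))

noncomputable def alphaF (N r : ℕ) (n : ℤ) : ℂ :=
  omegaN N ^ n * Complex.ofReal ((Real.sin (Real.pi * n / N)) ^ (2 * r) / Real.sqrt (U4r N r n))

noncomputable def psi0 (N r : ℕ) (k : ℤ) : ℂ :=
  (N : ℂ)⁻¹ * ∑ n ∈ Finset.range N, omegaN N ^ (k * (n : ℤ)) * betaF N r n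

noncomputable def psi1 (N r : ℕ) (k : ℤ) : ℂ :=
  (N : ℂ)⁻¹ * ∑ n ∈ Finset.range N, omegaN N ^ (k * (n : ℤ)) * alphaF N r n

noncomputable def ip (N : ℕ) (x y : ℤ → ℂ) : ℂ :=
  ∑ k ∈ Finset.range N, x k * (starRingEnd ℂ) (y k)

/-- DFT of the first-level complementary wavelet packet φ₀. -/
noncomputable def phi0hat (N r : ℕ) (n : ℕ) : ℂ :=
  if n = 0 then (Real.sqrt 2 : ℂ)
  else if 2 * n = N then 0
  else if 2 * n < N then -Complex.I * betaF N r n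
  else Complex.I * betaF N r n

/-- DFT of the first-level complementary wavelet packet φ₁. -/
noncomputable def phi1hat (N r : ℕ) (n : ℕ) : ℂ :=
  if n = 0 then 0
  else if 2 * n = N then -(Real.sqrt 2 : ℂ)
  else if 2 * n < N then -Complex.I * alphaF N r n
  else Complex.I * alphaF N r n

/-- The first-level complementary wavelet packets φ₀, φ₁, via the inverse DFT. -/
noncomputable def phiW (N r : ℕ) (μ : Fin 2) (k : ℤ) : ℂ :=
  (N : ℂ)⁻¹ * ∑ n ∈ Finset.range N,
    omegaN N ^ (k * (n : ℤ)) * (if μ.val = 0 then phi0hat N r n else phi1hat N r n)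

/-- The first-level discrete-spline wavelet packets ψ₀, ψ₁ indexed by μ : Fin 2. -/
noncomputable def psiW (N r : ℕ) (μ : Fin 2) (k : ℤ) : ℂ :=
  if μ.val = 0 then psi0 N r k else psi1 N r k

/-!
Write each wavelet as the inverse DFT of its frequency response `F`. Since
`∑_{l < M} ω^{2l(n - m)} = M · [M ∣ n - m]` for `N = 2M`, the expansion over the shifts by `2l`
collapses to `(M / N²) ∑_{n,m} [M ∣ n - m] x̂[n] ω^{km} ∑_i conj (F_i n) F_i m`. Hence the system
is a tight frame as soon as the Gram sums `∑_i conj (F_i n) F_i m` equal `A · δ_{nm}` whenever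
`n ≡ m (mod M)`, and then DFT inversion turns the expansion into `(A / 2) x`.
For `ψ₀, ψ₁` this holds with `A = 2`: `β² + |α|² = (cos^{4r} + sin^{4r}) / U^{4r} = 2`, and the
half-band shift `n ↦ n + N/2` swaps `cos` and `sin` while flipping the sign of `ωⁿ`, which cancels
the off-diagonal entry. The responses of `φ₀, φ₁` are those of `ψ₀, ψ₁` times `∓i`, except at
`0` and `N/2` where they are checked directly, so they also give `A = 2`; together, `A = 4`.
-/
open ComplexConjugate

lemma omegaN_ne_zero (N : ℕ) : omegaN N ≠ 0 := Complex.exp_ne_zero _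

lemma isPrimitiveRoot_omegaN {N : ℕ} (hN : N ≠ 0) : IsPrimitiveRoot (omegaN N) N :=
  Complex.isPrimitiveRoot_exp N hN

lemma conj_omegaN_zpow (N : ℕ) (a : ℤ) : conj (omegaN N ^ a) = omegaN N ^ (-a) := by
  rw [map_zpow₀, zpow_neg, ← inv_zpow, omegaN, ← Complex.exp_conj, ← Complex.exp_neg]
  congr 2
  simp only [map_div₀, map_mul, map_ofNat, Complex.conj_ofReal, Complex.conj_I, mul_neg,
    map_natCast]
  ring

lemma omegaN_mul_zpow_left {d M : ℕ} (hd : d ≠ 0) : omegaN (d * M) ^ (d : ℤ) = omegaN M := by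
  rw [zpow_natCast, omegaN, omegaN, ← Complex.exp_nat_mul]
  congr 1
  rcases eq_or_ne M 0 with rfl | hM
  · simp
  · push_cast
    field_simp

lemma omegaN_two_mul_zpow_self {M : ℕ} (hM : M ≠ 0) : omegaN (2 * M) ^ (M : ℤ) = -1 := by
  rw [zpow_natCast, omegaN, ← Complex.exp_nat_mul, ← Complex.exp_pi_mul_I]
  congr 1
  push_cast
  field_simp

lemma IsPrimitiveRoot.sum_range_zpow_mul {K : Type*} [Field K] {ζ : K} {P : ℕ}
    (hζ : IsPrimitiveRoot ζ P) (e : ℤ) :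
    ∑ l ∈ range P, ζ ^ (e * l) = if (P : ℤ) ∣ e then (P : K) else 0 := by
  simp only [zpow_mul, zpow_natCast]
  split_ifs with h
  · simp [(hζ.zpow_eq_one_iff_dvd e).2 h]
  · have hne : ζ ^ e ≠ 1 := fun h1 => h ((hζ.zpow_eq_one_iff_dvd e).1 h1)
    rw [geom_sum_eq hne, ← zpow_natCast, ← zpow_mul, mul_comm, zpow_mul, zpow_natCast,
      hζ.pow_eq_one, one_zpow, sub_self, zero_div]

noncomputable def idft (N : ℕ) (F : ℕ → ℂ) (s : ℤ) : ℂ :=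
  (N : ℂ)⁻¹ * ∑ n ∈ range N, omegaN N ^ (s * n) * F n

noncomputable def dft (N : ℕ) (x : ℤ → ℂ) (n : ℕ) : ℂ :=
  ∑ t ∈ range N, x t * omegaN N ^ (-((t : ℤ) * n))

lemma conj_idft (N : ℕ) (F : ℕ → ℂ) (s : ℤ) :
    conj (idft N F s) = (N : ℂ)⁻¹ * ∑ n ∈ range N, omegaN N ^ (-(s * n)) * conj (F n) := by
  simp only [idft, map_mul, map_inv₀, map_natCast, map_sum, conj_omegaN_zpow]

lemma ip_idft_sub (N : ℕ) (x : ℤ → ℂ) (F : ℕ → ℂ) (a : ℤ) :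
    ip N x (fun t => idft N F (t - a))
      = (N : ℂ)⁻¹ * ∑ n ∈ range N, omegaN N ^ (a * n) * conj (F n) * dft N x n := by
  simp only [ip, conj_idft, dft, mul_sum]
  rw [Finset.sum_comm]
  refine sum_congr rfl fun n _ => sum_congr rfl fun t _ => ?_
  rw [show -((t - a) * n) = a * n + -(t * n) by ring, zpow_add₀ (omegaN_ne_zero N)]
  ring

lemma idft_sub (N : ℕ) (F : ℕ → ℂ) (k a : ℤ) :
    idft N F (k - a)
      = (N : ℂ)⁻¹ * ∑ m ∈ range N, omegaN N ^ (-(a * m)) * omegaN N ^ (k * m) * F m := by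
  simp only [idft, ← zpow_add₀ (omegaN_ne_zero N)]
  congr 1
  refine sum_congr rfl fun m _ => ?_
  ring_nf

lemma sum_range_omegaN_zpow_mul_eq_ite {N d M : ℕ} (hNM : N = d * M) (hd : d ≠ 0) (hM : M ≠ 0)
    (e : ℤ) : ∑ l ∈ range M, omegaN N ^ (d * l * e) = if (M : ℤ) ∣ e then (M : ℂ) else 0 := by
  subst hNM
  simp_rw [mul_comm _ e, mul_left_comm e, zpow_mul, omegaN_mul_zpow_left hd, ← zpow_mul]
  exact (isPrimitiveRoot_omegaN hM).sum_range_zpow_mul e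

lemma sum_range_shift_ip_mul_idft {N d M : ℕ} (hNM : N = d * M) (hd : d ≠ 0) (hM : M ≠ 0)
    (x : ℤ → ℂ) (F : ℕ → ℂ) (k : ℤ) :
    ∑ l ∈ range M, ip N x (fun t => idft N F (t - d * l)) * idft N F (k - d * l)
      = (N : ℂ)⁻¹ ^ 2 * ∑ m ∈ range N, ∑ n ∈ range N,
          (if (M : ℤ) ∣ n - m then (M : ℂ) else 0) * omegaN N ^ (k * m) * dft N x n
            * (conj (F n) * F m) := by
  simp_rw [← sum_range_omegaN_zpow_mul_eq_ite hNM hd hM, ip_idft_sub, idft_sub, mul_sum, sum_mul]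
  rw [← Finset.sum_comm_cycle]
  simp_rw [mul_sum]
  refine sum_congr rfl fun m _ => sum_congr rfl fun n _ => sum_congr rfl fun l _ => ?_
  rw [mul_sub, sub_eq_add_neg, zpow_add₀ (omegaN_ne_zero N)]
  ring

lemma Function.Periodic.sum_range_ite_dvd_sub {x : ℤ → ℂ} {N : ℕ} (hx : Function.Periodic x N)
    (hN : N ≠ 0) (k : ℤ) : ∑ t ∈ range N, (if (N : ℤ) ∣ k - t then x t else 0) = x k := by
  have hNpos : (0 : ℤ) < N := by positivity
  obtain ⟨t₀, ht₀⟩ : ∃ t₀ : ℕ, (t₀ : ℤ) = k % N :=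
    ⟨(k % N).toNat, Int.toNat_of_nonneg (Int.emod_nonneg k hNpos.ne')⟩
  have ht₀N : t₀ < N := by have := Int.emod_lt_of_pos k hNpos; omega
  have hdvd : ∀ t ∈ range N, (N : ℤ) ∣ k - t ↔ t = t₀ := fun t ht => by
    rw [← Int.modEq_iff_dvd, Int.ModEq,
      Int.emod_eq_of_lt (by positivity) (by exact_mod_cast mem_range.1 ht), ← ht₀, Nat.cast_inj]
  rw [sum_congr rfl fun t ht => if_congr (hdvd t ht) rfl rfl, sum_ite_eq' _ _ _,
    if_pos (mem_range.2 ht₀N), ht₀, Int.emod_def, mul_comm]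
  exact hx.sub_int_mul_eq (k / N)

lemma idft_dft {x : ℤ → ℂ} {N : ℕ} (hx : Function.Periodic x N) (hN : N ≠ 0) (k : ℤ) :
    idft N (dft N x) k = x k := by
  have hroot (t : ℕ) : ∑ n ∈ range N, omegaN N ^ (k * n) * omegaN N ^ (-((t : ℤ) * n))
      = if (N : ℤ) ∣ k - t then (N : ℂ) else 0 := by
    simp_rw [← zpow_add₀ (omegaN_ne_zero N), ← neg_mul, ← add_mul, ← sub_eq_add_neg]
    exact (isPrimitiveRoot_omegaN hN).sum_range_zpow_mul _
  calc idft N (dft N x) k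
      = (N : ℂ)⁻¹ * ∑ t ∈ range N, x t *
          ∑ n ∈ range N, omegaN N ^ (k * n) * omegaN N ^ (-((t : ℤ) * n)) := by
        simp only [idft, dft, mul_sum]
        rw [Finset.sum_comm]
        exact sum_congr rfl fun t _ => sum_congr rfl fun n _ => by ring
    _ = (N : ℂ)⁻¹ * ∑ t ∈ range N, (N : ℂ) * (if (N : ℤ) ∣ k - t then x t else 0) := by
        simp_rw [hroot, mul_ite, mul_zero, mul_comm]
    _ = x k := by
        rw [← mul_sum, hx.sum_range_ite_dvd_sub hN, ← mul_assoc,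
          inv_mul_cancel₀ (Nat.cast_ne_zero.2 hN), one_mul]

noncomputable def gram {ι : Type*} [Fintype ι] (F : ι → ℕ → ℂ) (n m : ℕ) : ℂ :=
  ∑ i, conj (F i n) * F i m

theorem frame_expansion_of_gram_eq_ite {ι : Type*} [Fintype ι] {N d M : ℕ} (hNM : N = d * M)
    (hd : d ≠ 0) (hM : M ≠ 0) {x : ℤ → ℂ} (hx : Function.Periodic x N) (F : ι → ℕ → ℂ) (A : ℂ)
    (hF : ∀ n < N, ∀ m < N, (M : ℤ) ∣ n - m → gram F n m = if n = m then A else 0) (k : ℤ) :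
    ∑ i, ∑ l ∈ range M, ip N x (fun t => idft N (F i) (t - d * l)) * idft N (F i) (k - d * l)
      = A / d * x k := by
  have hN : N ≠ 0 := hNM ▸ mul_ne_zero hd hM
  have hdiag : ∀ m ∈ range N, ∀ n ∈ range N,
      (if (M : ℤ) ∣ n - m then (M : ℂ) else 0) * gram F n m = if n = m then M * A else 0 := by
    intro m hm n hn
    rw [mem_range] at hm hn
    by_cases hnm : n = m
    · subst hnm
      simp [hF n hn n hn]
    · split_ifs with hdvd
      · simp [hF n hn m hm hdvd, hnm]
      · rw [zero_mul]
  calc _ = (N : ℂ)⁻¹ ^ 2 * ∑ m ∈ range N, ∑ n ∈ range N, omegaN N ^ (k * m) * dft N x n *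
          ((if (M : ℤ) ∣ n - m then (M : ℂ) else 0) * gram F n m) := by
        simp_rw [sum_range_shift_ip_mul_idft hNM hd hM, ← mul_sum, gram, mul_sum]
        rw [← Finset.sum_comm_cycle]
        exact sum_congr rfl fun m _ => sum_congr rfl fun n _ => sum_congr rfl fun i _ => by ring
    _ = (N : ℂ)⁻¹ ^ 2 * ∑ m ∈ range N, ∑ n ∈ range N,
          (if n = m then M * A * (omegaN N ^ (k * m) * dft N x m) else 0) := by
        refine congrArg _ (sum_congr rfl fun m hm => sum_congr rfl fun n hn => ?_)
        rw [hdiag m hm n hn]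
        split_ifs with hnm
        · subst hnm
          ring
        · rw [mul_zero]
    _ = (N : ℂ)⁻¹ ^ 2 * ∑ m ∈ range N, M * A * (omegaN N ^ (k * m) * dft N x m) := by
        refine congrArg _ (sum_congr rfl fun m hm => ?_)
        rw [sum_ite_eq' _ _ _, if_pos hm]
    _ = M * A / N * idft N (dft N x) k := by
        rw [idft, ← mul_sum]
        ring
    _ = A / d * x k := by
        rw [idft_dft hx hN, hNM]
        push_cast
        field_simp

lemma conj_gram {ι : Type*} [Fintype ι] (F : ι → ℕ → ℂ) (n m : ℕ) :
    conj (gram F n m) = gram F m n := by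
  simp only [gram, map_sum, map_mul, Complex.conj_conj, mul_comm]

lemma gram_sum_elim {ι κ : Type*} [Fintype ι] [Fintype κ] (F : ι → ℕ → ℂ) (G : κ → ℕ → ℂ)
    (n m : ℕ) : gram (Sum.elim F G) n m = gram F n m + gram G n m :=
  Fintype.sum_sum_type _

lemma gram_eq_ite_of_two_mul {ι : Type*} [Fintype ι] {M : ℕ} {F : ι → ℕ → ℂ} {A : ℂ}
    (hdiag : ∀ n < 2 * M, gram F n n = A) (hhalf : ∀ m < M, gram F (m + M) m = 0) :
    ∀ n < 2 * M, ∀ m < 2 * M, (M : ℤ) ∣ n - m → gram F n m = if n = m then A else 0 := by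
  intro n hn m hm ⟨c, hc⟩
  have hc1 : c ≤ 1 := by nlinarith
  have hc2 : -1 ≤ c := by nlinarith
  interval_cases c
  · obtain rfl : m = n + M := by omega
    rw [if_neg (by omega), ← conj_gram, hhalf n (by omega), map_zero]
  · obtain rfl : n = m := by omega
    rw [if_pos rfl, hdiag n hn]
  · obtain rfl : n = m + M := by omega
    rw [if_neg (by omega), hhalf m (by omega)]

lemma U4r_pos (N r : ℕ) (n : ℤ) : 0 < U4r N r n := by
  have hpow (y : ℝ) : y ^ (4 * r) = (y ^ 2) ^ (2 * r) := by rw [← pow_mul]; ring_nf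
  have hsc := Real.sin_sq_add_cos_sq (Real.pi * n / N)
  rw [U4r, hpow, hpow]
  rcases eq_or_ne (Real.cos (Real.pi * n / N)) 0 with hc | hc
  · rw [hc, zero_pow two_ne_zero, add_zero] at hsc
    rw [hsc]
    positivity
  · have := pow_pos (sq_pos_of_ne_zero hc) (2 * r)
    positivity

noncomputable def cosAmp (N r : ℕ) (n : ℤ) : ℝ :=
  Real.cos (Real.pi * n / N) ^ (2 * r) / Real.sqrt (U4r N r n)

noncomputable def sinAmp (N r : ℕ) (n : ℤ) : ℝ :=
  Real.sin (Real.pi * n / N) ^ (2 * r) / Real.sqrt (U4r N r n)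

lemma betaF_eq_cosAmp (N r : ℕ) (n : ℤ) : betaF N r n = cosAmp N r n := rfl

lemma alphaF_eq_sinAmp (N r : ℕ) (n : ℤ) : alphaF N r n = omegaN N ^ n * sinAmp N r n := rfl

lemma cosAmp_sq_add_sinAmp_sq (N r : ℕ) (n : ℤ) : cosAmp N r n ^ 2 + sinAmp N r n ^ 2 = 2 := by
  have hU := U4r_pos N r n
  rw [cosAmp, sinAmp, div_pow, div_pow, Real.sq_sqrt hU.le, ← add_div, ← pow_mul, ← pow_mul,
    div_eq_iff hU.ne', U4r]
  ring_nf

lemma pi_mul_add_half_div {M : ℕ} (hM : M ≠ 0) (n : ℤ) :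
    Real.pi * ((n + M : ℤ) : ℝ) / ((2 * M : ℕ) : ℝ)
      = Real.pi * n / ((2 * M : ℕ) : ℝ) + Real.pi / 2 := by
  push_cast
  field_simp

lemma U4r_add_half {M : ℕ} (hM : M ≠ 0) (r : ℕ) (n : ℤ) :
    U4r (2 * M) r (n + M) = U4r (2 * M) r n := by
  rw [U4r, U4r, pi_mul_add_half_div hM, Real.cos_add_pi_div_two, Real.sin_add_pi_div_two,
    Even.neg_pow ⟨2 * r, by ring⟩, add_comm]

lemma cosAmp_add_half {M : ℕ} (hM : M ≠ 0) (r : ℕ) (n : ℤ) :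
    cosAmp (2 * M) r (n + M) = sinAmp (2 * M) r n := by
  rw [cosAmp, sinAmp, U4r_add_half hM, pi_mul_add_half_div hM, Real.cos_add_pi_div_two,
    Even.neg_pow ⟨r, by ring⟩]

lemma sinAmp_add_half {M : ℕ} (hM : M ≠ 0) (r : ℕ) (n : ℤ) :
    sinAmp (2 * M) r (n + M) = cosAmp (2 * M) r n := by
  rw [sinAmp, cosAmp, U4r_add_half hM, pi_mul_add_half_div hM, Real.sin_add_pi_div_two]

noncomputable def psiHat (N r : ℕ) (μ : Fin 2) (n : ℕ) : ℂ :=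
  if μ.val = 0 then betaF N r n else alphaF N r n

noncomputable def phiHat (N r : ℕ) (μ : Fin 2) (n : ℕ) : ℂ :=
  if μ.val = 0 then phi0hat N r n else phi1hat N r n

lemma psiW_eq_idft (N r : ℕ) (μ : Fin 2) : psiW N r μ = idft N (psiHat N r μ) := by
  fin_cases μ <;> rfl

lemma phiW_eq_idft (N r : ℕ) (μ : Fin 2) : phiW N r μ = idft N (phiHat N r μ) := rfl

lemma gram_psiHat (N r n m : ℕ) :
    gram (psiHat N r) n m
      = conj (betaF N r n) * betaF N r m + conj (alphaF N r n) * alphaF N r m := by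
  simp [gram, psiHat]

lemma gram_phiHat (N r n m : ℕ) :
    gram (phiHat N r) n m
      = conj (phi0hat N r n) * phi0hat N r m + conj (phi1hat N r n) * phi1hat N r m := by
  simp [gram, phiHat]

lemma gram_psiHat_self (N r n : ℕ) : gram (psiHat N r) n n = 2 := by
  rw [gram_psiHat, betaF_eq_cosAmp, alphaF_eq_sinAmp, map_mul, conj_omegaN_zpow,
    Complex.conj_ofReal, Complex.conj_ofReal, mul_mul_mul_comm, ← zpow_add₀ (omegaN_ne_zero N),
    neg_add_cancel, zpow_zero, one_mul]
  have h := cosAmp_sq_add_sinAmp_sq N r n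
  rw [sq, sq] at h
  exact_mod_cast h

lemma gram_psiHat_add_half {M : ℕ} (hM : M ≠ 0) (r m : ℕ) :
    gram (psiHat (2 * M) r) (m + M) m = 0 := by
  have hω : omegaN (2 * M) ^ (-(m : ℤ)) * omegaN (2 * M) ^ (m : ℤ) = 1 := by
    rw [← zpow_add₀ (omegaN_ne_zero _), neg_add_cancel, zpow_zero]
  rw [gram_psiHat, betaF_eq_cosAmp, betaF_eq_cosAmp, alphaF_eq_sinAmp, alphaF_eq_sinAmp,
    Nat.cast_add, cosAmp_add_half hM, sinAmp_add_half hM, zpow_add₀ (omegaN_ne_zero _),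
    omegaN_two_mul_zpow_self hM]
  simp only [map_mul, map_neg, map_one, Complex.conj_ofReal, conj_omegaN_zpow]
  linear_combination -((cosAmp (2 * M) r m : ℂ) * sinAmp (2 * M) r m) * hω

lemma conj_mul_mul_mul (a b z w : ℂ) : conj (a * z) * (b * w) = conj a * b * (conj z * w) := by
  rw [map_mul]
  ring

lemma ofReal_sqrt_two_mul_self : (Real.sqrt 2 : ℂ) * Real.sqrt 2 = 2 := by
  rw [← Complex.ofReal_mul, Real.mul_self_sqrt zero_le_two, Complex.ofReal_ofNat]

lemma gram_phiHat_self (N r n : ℕ) : gram (phiHat N r) n n = 2 := by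
  rw [gram_phiHat, phi0hat, phi1hat]
  split_ifs
  · simp [ofReal_sqrt_two_mul_self]
  · simp [ofReal_sqrt_two_mul_self]
  all_goals
    rw [conj_mul_mul_mul, conj_mul_mul_mul, ← mul_add, ← gram_psiHat, gram_psiHat_self]
    simp

lemma gram_phiHat_add_half {M : ℕ} (hM : M ≠ 0) (r : ℕ) {m : ℕ} (hm : m < M) :
    gram (phiHat (2 * M) r) (m + M) m = 0 := by
  rw [gram_phiHat, phi0hat, phi1hat, phi0hat, phi1hat]
  rcases eq_or_ne m 0 with rfl | hm0
  · simp [hM]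
  · have hM0 : m + M ≠ 0 := by omega
    have hhalf : 2 * (m + M) ≠ 2 * M ∧ ¬2 * (m + M) < 2 * M ∧ 2 * m ≠ 2 * M ∧ 2 * m < 2 * M := by
      omega
    simp only [hm0, hM0, hhalf, if_false, if_true, conj_mul_mul_mul]
    rw [← mul_add, ← gram_psiHat, gram_psiHat_add_half hM, mul_zero]

lemma gram_sum_elim_psiHat_phiHat {M : ℕ} (hM : M ≠ 0) (r : ℕ) :
    ∀ n < 2 * M, ∀ m < 2 * M, (M : ℤ) ∣ n - m →
      gram (Sum.elim (psiHat (2 * M) r) (phiHat (2 * M) r)) n m = if n = m then 4 else 0 :=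
  gram_eq_ite_of_two_mul
    (fun n _ => by rw [gram_sum_elim, gram_psiHat_self, gram_phiHat_self]; norm_num)
    (fun m hm => by
      rw [gram_sum_elim, gram_psiHat_add_half hM, gram_phiHat_add_half hM r hm, add_zero])

theorem stmt_12_general (j r : ℕ) (hj : 3 ≤ j) (N : ℕ) (hN : N = 2 ^ j)
    (x : ℤ → ℂ) (hper : ∀ k : ℤ, x (k + N) = x k) :
    ∀ k : ℤ,
      x k = (1 / 2 : ℂ) * ∑ μ : Fin 2, ∑ l ∈ Finset.range (N / 2),
        (ip N x (fun t => psiW N r μ (t - 2 * (l : ℤ))) * psiW N r μ (k - 2 * (l : ℤ)) +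
         ip N x (fun t => phiW N r μ (t - 2 * (l : ℤ))) * phiW N r μ (k - 2 * (l : ℤ))) := by
  intro k
  obtain ⟨M, rfl, hM⟩ : ∃ M, N = 2 * M ∧ M ≠ 0 :=
    ⟨2 ^ (j - 1), by rw [hN, ← pow_succ']; congr 1; omega, by positivity⟩
  have hframe := frame_expansion_of_gram_eq_ite rfl two_ne_zero hM hper _ 4
    (gram_sum_elim_psiHat_phiHat hM r) k
  simp only [Fintype.sum_sum_type, Sum.elim_inl, Sum.elim_inr, Nat.cast_ofNat, ← psiW_eq_idft,
    ← phiW_eq_idft] at hframe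
  rw [Nat.mul_div_cancel_left M two_pos]
  simp only [sum_add_distrib]
  rw [hframe]
  ring

/-- Every real-valued x ∈ Π[N] admits the tight-frame expansion
x[k] = (1/2) Σ_{μ=0}^{1} Σ_{l=0}^{N/2−1} ( ⟨x,ψ_μ[·−2l]⟩ ψ_μ[k−2l] + ⟨x,φ_μ[·−2l]⟩ φ_μ[k−2l] ):
the two-sample shifts of ψ₀, ψ₁, φ₀, φ₁ form a tight frame of Π[N] with frame constant 2. -/
theorem stmt_12 (j r : ℕ) (hj : 3 ≤ j) (hr : 1 ≤ r) (N : ℕ) (hN : N = 2 ^ j)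
    (x : ℤ → ℂ) (hper : ∀ k : ℤ, x (k + N) = x k) (hreal : ∀ k : ℤ, (x k).im = 0) :
    ∀ k : ℤ,
      x k = (1 / 2 : ℂ) * ∑ μ : Fin 2, ∑ l ∈ Finset.range (N / 2),
        (ip N x (fun t => psiW N r μ (t - 2 * (l : ℤ))) * psiW N r μ (k - 2 * (l : ℤ)) +
         ip N x (fun t => phiW N r μ (t - 2 * (l : ℤ))) * phiW N r μ (k - 2 * (l : ℤ))) :=
  stmt_12_general j r hj N hN x hper
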